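/- arXiv:1102.4862 — 2 statements merged into one kernel-verified Lean document; each statement's English description precedes it below -/
import Mathlib

section
/- Let P be a neighbourly 2m-polytope (m > 1) with at least 2m+3 vertices, let U be a universal k-face of P, and let V be an n-face of P with U ⊆ V and 0 ≤ k < n ≤ 2m−1. Then V is a universal n-face of P if and only if V/U is a universal (n−k−1)-face of the quotient polytope P/U. -/
/-!
In a neighbourly `2m`-polytope with at least `2m + 3` vertices any `2m + 1` vertices are affinely
independent: by Radon's theorem they split into two parts with meeting hulls, the smaller part
has at most `m` vertices and so spans a face, and that face cannot meet the hull of the other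
part. Hence every face of dimension below `2m` is a simplex, its vertex subsets span faces, and
`V/U` is the simplex on the images of `W = 𝒱(V) ∖ 𝒱(U)`. For `S` disjoint from `𝒱(U)`, the face
lattice of `P/U` matches `conv (S ∪ V)` with `conv (φ(S) ∪ V/U)`, and `φ` preserves the number
of vertices; since `(2m - k - 1) - (n - k - 1) - 1 = 2m - n - 1`, the two universality
conditions quantify over the same sets.
-/

open Set

noncomputable section

/-- `Euc N` is the Euclidean space `ℝ^N`. -/
abbrev Euc (N : ℕ) : Type := EuclideanSpace ℝ (Fin N)

/-- A polytope is the convex hull of a finite point set. -/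
def IsPolytope {N : ℕ} (P : Set (Euc N)) : Prop :=
  ∃ V : Set (Euc N), V.Finite ∧ P = convexHull ℝ V

-- The dimension of a set: the dimension of its affine hull (with `pdim ∅ = -1`).
open Classical in
def pdim {N : ℕ} (A : Set (Euc N)) : ℤ :=
  if A = ∅ then -1 else (Module.finrank ℝ (affineSpan ℝ A).direction : ℤ)

/-- The vertex set of a polytope: its extreme points. -/
def verts {N : ℕ} (P : Set (Euc N)) : Set (Euc N) :=
  P.extremePoints ℝ

/-- A proper face of `P`: the intersection of `P` with a supporting hyperplane. -/
def IsProperFace {N : ℕ} (P F : Set (Euc N)) : Prop :=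
  ∃ (l : Euc N →ₗ[ℝ] ℝ) (c : ℝ), l ≠ 0 ∧ (∀ x ∈ P, l x ≤ c) ∧ (∃ x ∈ P, l x = c) ∧
    F = {x | x ∈ P ∧ l x = c}

/-- A face of `P`, where the improper faces `∅` and `P` itself are also counted as faces. -/
def IsFaceOf {N : ℕ} (P F : Set (Euc N)) : Prop :=
  F = ∅ ∨ F = P ∨ IsProperFace P F

/-- Membership in the boundary complex `𝓑(P)` (all proper faces together with `∅`). -/
def MemBoundary {N : ℕ} (P F : Set (Euc N)) : Prop :=
  F = ∅ ∨ IsProperFace P F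

/-- `F` is a `k`-dimensional (proper) face of `P`. -/
def IsFaceOfDim {N : ℕ} (P F : Set (Euc N)) (k : ℤ) : Prop :=
  IsProperFace P F ∧ pdim F = k

/-- A facet of a `d`-polytope `P` is a `(d-1)`-face. -/
def IsFacet {N : ℕ} (d : ℕ) (P F : Set (Euc N)) : Prop :=
  IsFaceOfDim P F ((d : ℤ) - 1)

/-- `P` is `k`-neighbourly: every `k` of its vertices form the vertex set of a proper face. -/
def IsKNeighbourly {N : ℕ} (P : Set (Euc N)) (k : ℕ) : Prop :=
  ∀ S ⊆ verts P, S.ncard = k → ∃ F, IsProperFace P F ∧ verts F = S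

/-- `P` is a neighbourly `d`-polytope: a `d`-dimensional `⌊d/2⌋`-neighbourly polytope. -/
def IsNeighbourly {N : ℕ} (d : ℕ) (P : Set (Euc N)) : Prop :=
  IsPolytope P ∧ pdim P = (d : ℤ) ∧ IsKNeighbourly P (d / 2)

/-- `U` is a universal `k`-face of the `d`-polytope `P`:
`conv (S ∪ U)` is a face of `P` for every `S ⊆ 𝒱(P)` with `|S| ≤ ⌊(d-k-1)/2⌋`. -/
def IsUniversalFace {N : ℕ} (d : ℕ) (P U : Set (Euc N)) (k : ℕ) : Prop :=
  IsFaceOfDim P U (k : ℤ) ∧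
  ∀ S ⊆ verts P, S.ncard ≤ (d - k - 1) / 2 →
    IsProperFace P (convexHull ℝ (S ∪ U))

/-- `z` is beyond the facet `F` of `P`: the supporting hyperplane of `F` separates `z` from `P`. -/
def Beyond {N : ℕ} (P F : Set (Euc N)) (z : Euc N) : Prop :=
  ∃ (l : Euc N →ₗ[ℝ] ℝ) (c : ℝ), l ≠ 0 ∧ (∀ x ∈ P, l x ≤ c) ∧
    F = {x | x ∈ P ∧ l x = c} ∧ c < l z

/-- `z` is beneath the facet `F` of `P`: `z` lies on the same open side of `aff F` as `P`. -/
def Beneath {N : ℕ} (P F : Set (Euc N)) (z : Euc N) : Prop :=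
  ∃ (l : Euc N →ₗ[ℝ] ℝ) (c : ℝ), l ≠ 0 ∧ (∀ x ∈ P, l x ≤ c) ∧
    F = {x | x ∈ P ∧ l x = c} ∧ l z < c

/-- `Phi x y j = Φ_j = conv {x_1, y_1, …, x_j, y_j}` (1-indexed; `Phi x y 0 = ∅`). -/
def Phi {N m : ℕ} (x y : Fin m → Euc N) (j : ℕ) : Set (Euc N) :=
  convexHull ℝ {p | ∃ i : Fin m, (i : ℕ) < j ∧ (p = x i ∨ p = y i)}

/-- `𝒯 = {Φ_1, …, Φ_m}` is a universal tower in `P`: the `x_i, y_i` are distinct vertices of `P`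
and `Φ_j` is a universal `(2j-1)`-face of `P` for `1 ≤ j ≤ m`. -/
def IsUniversalTower {N : ℕ} (m : ℕ) (P : Set (Euc N)) (x y : Fin m → Euc N) : Prop :=
  Function.Injective (Sum.elim x y) ∧
  (∀ i, x i ∈ verts P) ∧ (∀ i, y i ∈ verts P) ∧
  ∀ j, 1 ≤ j → j ≤ m → IsUniversalFace (2 * m) P (Phi x y j) (2 * j - 1)

/-- `F ∈ 𝒞(𝒯) = (𝓕_1∖𝓕_2) ∪ (𝓕_3∖𝓕_4) ∪ ⋯` where `𝓕_i` is the set of facets containing `Φ_i`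
(with `𝓕_j = ∅` for `j > m`). -/
def InSewC {N : ℕ} (m : ℕ) (x y : Fin m → Euc N) (F : Set (Euc N)) : Prop :=
  ∃ i, Odd i ∧ 1 ≤ i ∧ i ≤ m ∧ Phi x y i ⊆ F ∧ (i = m ∨ ¬ Phi x y (i + 1) ⊆ F)

/-- `z` lies exactly beyond `𝒞(𝒯)`: `z` is beyond every facet of `P` in `𝒞(𝒯)` and beneath
every facet of `P` not in `𝒞(𝒯)`. -/
def ExactlyBeyond {N : ℕ} (m : ℕ) (P : Set (Euc N)) (x y : Fin m → Euc N) (z : Euc N) : Prop :=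
  ∀ F, IsFacet (2 * m) P F →
    (InSewC m x y F → Beyond P F z) ∧ (¬ InSewC m x y F → Beneath P F z)

/-- `Q` is a quotient polytope `P/G` of `P` by its face `G`, with vertex correspondence `φ`:
the face lattice of `Q` is isomorphic to the interval `{F : G ⊆ F ⊆ P}` of the face lattice
of `P`, via vertex sets. -/
def IsQuotient {N M : ℕ} (P G : Set (Euc N)) (Q : Set (Euc M)) (φ : Euc N → Euc M) : Prop :=
  IsPolytope Q ∧ Set.BijOn φ (verts P \ verts G) (verts Q) ∧
  ∀ W ⊆ verts P \ verts G,
    ((∃ F, IsFaceOf P F ∧ G ⊆ F ∧ verts F = W ∪ verts G) ↔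
     (∃ F', IsFaceOf Q F' ∧ verts F' = φ '' W))

/-- `P` and `Q` are combinatorially equivalent via the vertex bijection `ψ`:
`ψ` maps vertex sets of faces onto vertex sets of faces in both directions. -/
def CombEquiv {N M : ℕ} (P : Set (Euc N)) (Q : Set (Euc M)) (ψ : Euc N → Euc M) : Prop :=
  Set.BijOn ψ (verts P) (verts Q) ∧
  ∀ W ⊆ verts P,
    ((∃ F, IsFaceOf P F ∧ verts F = W) ↔ (∃ F', IsFaceOf Q F' ∧ verts F' = ψ '' W))

/-- `A` is a missing face of `P` relative to the face `G`;
`IsMissingFaceRel P G` describes `ℳ(P/G)`. -/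
def IsMissingFaceRel {N : ℕ} (P G A : Set (Euc N)) : Prop :=
  A ⊆ verts P \ verts G ∧
  ¬ MemBoundary P (convexHull ℝ (A ∪ G)) ∧
  ∀ A' ⊂ A, MemBoundary P (convexHull ℝ (A' ∪ G))

/-- `A ∈ ℳ(P)`, the set of missing faces of `P`. -/
def IsMissingFace {N : ℕ} (P A : Set (Euc N)) : Prop :=
  IsMissingFaceRel P ∅ A

/-- The moment curve `t ↦ (t, t², …, t^d)` in `ℝ^d`. -/
def momentCurve (d : ℕ) (t : ℝ) : Euc d :=
  WithLp.toLp 2 (fun i => t ^ ((i : ℕ) + 1))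

/-- `C` is a cyclic `d`-polytope with `n` vertices: the convex hull of `n` distinct points
on the moment curve in `ℝ^d`. -/
def IsCyclicPolytope (d n : ℕ) (C : Set (Euc d)) : Prop :=
  ∃ t : Fin n → ℝ, Function.Injective t ∧
    C = convexHull ℝ (Set.range fun i => momentCurve d (t i)) ∧
    (verts C).ncard = n

section ConvexHull

variable {E : Type*} [AddCommGroup E] [Module ℝ E]

lemma forall_le_of_mem_convexHull {Z : Set E} {g : E →ₗ[ℝ] ℝ} {c : ℝ}
    (h : ∀ z ∈ Z, g z ≤ c) : ∀ x ∈ convexHull ℝ Z, g x ≤ c :=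
  fun _ hx => convexHull_min h (convex_halfSpace_le g.isLinear c) hx

lemma mem_convexHull_setOf_eq_of_le {Z : Set E} {g : E →ₗ[ℝ] ℝ} {c : ℝ} {x : E}
    (h : ∀ z ∈ Z, g z ≤ c) (hx : x ∈ convexHull ℝ Z) (hgx : g x = c) :
    x ∈ convexHull ℝ {z ∈ Z | g z = c} := by
  classical
  rw [convexHull_eq] at hx
  obtain ⟨ι, t, w, z, hw₀, hw₁, hz, rfl⟩ := hx
  have hslack : ∑ i ∈ t, w i * (c - g (z i)) = 0 := by
    simp only [mul_sub, Finset.sum_sub_distrib, ← Finset.sum_mul, hw₁, one_mul, ← hgx,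
      Finset.centerMass_eq_of_sum_1 t z hw₁, map_sum, map_smul, smul_eq_mul, sub_self]
  have htight : ∀ i ∈ t, w i ≠ 0 → g (z i) = c := fun i hi hwi => by
    have := (Finset.sum_eq_zero_iff_of_nonneg fun j hj =>
      mul_nonneg (hw₀ j hj) (sub_nonneg.2 (h _ (hz j hj)))).1 hslack i hi
    linarith [(mul_eq_zero.1 this).resolve_left hwi]
  rw [← Finset.centerMass_filter_ne_zero]
  refine Finset.centerMass_mem_convexHull _ (fun i hi => hw₀ i (Finset.mem_filter.1 hi).1)
    (by rw [Finset.sum_filter_ne_zero, hw₁]; exact one_pos) fun i hi => ?_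
  obtain ⟨hi, hwi⟩ := Finset.mem_filter.1 hi
  exact ⟨hz i hi, htight i hi hwi⟩

lemma exists_pos_forall_add_mul_neg {ι : Type*} {s : Set ι} (hs : s.Finite) {f g : ι → ℝ}
    (hf : ∀ i ∈ s, f i < 0) : ∃ ε > 0, ∀ i ∈ s, f i + ε * g i < 0 := by
  have hnear : ∀ᶠ ε in nhds (0 : ℝ), ∀ i ∈ s, f i + ε * g i < 0 :=
    (Filter.eventually_all_finite hs).2 fun i hi =>
      Filter.Tendsto.eventually_lt_const (by simpa using hf i hi)
        ((continuous_const.add (continuous_id.mul continuous_const)).tendsto 0)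
  obtain ⟨ε, hε, hεpos⟩ :=
    ((hnear.filter_mono nhdsWithin_le_nhds).and (self_mem_nhdsWithin (s := Set.Ioi 0))).exists
  exact ⟨ε, hεpos, hε⟩

end ConvexHull

lemma AffineIndependent.exists_linearMap_eq_sub_one {E : Type*} [AddCommGroup E] [Module ℝ E]
    [FiniteDimensional ℝ E] {S B : Set E} (hS : AffineIndependent ℝ ((↑) : S → E))
    (hBS : B ⊆ S) :
    ∃ (l : E →ₗ[ℝ] ℝ) (c : ℝ), (∀ x ∈ B, l x = c) ∧ ∀ x ∈ S \ B, l x = c - 1 := by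
  classical
  obtain ⟨t, hSt, hti, htt⟩ := exists_subset_affineIndependent_affineSpan_eq_top hS
  have := (finite_set_of_fin_dim_affineIndependent ℝ hti).fintype
  let b : AffineBasis t ℝ E := ⟨(↑), hti, by rwa [Subtype.range_coe]⟩
  let T := Finset.univ.filter fun i : t => (i : E) ∈ B
  have hcoord : ∀ x ∈ S, ∑ i ∈ T, b.coord i x = if x ∈ B then 1 else 0 := fun x hx => by
    have hxb : x = b ⟨x, hSt hx⟩ := rfl
    conv_lhs => rw [hxb]
    simp [T, b.coord_apply]
  have hlin : ∀ x, (∑ i ∈ T, (b.coord i).linear) x =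
      ∑ i ∈ T, b.coord i x - ∑ i ∈ T, b.coord i 0 := fun x => by
    rw [LinearMap.sum_apply, ← Finset.sum_sub_distrib]
    exact Finset.sum_congr rfl fun i _ => by rw [congrFun (b.coord i).decomp x]; simp
  refine ⟨∑ i ∈ T, (b.coord i).linear, 1 - ∑ i ∈ T, b.coord i 0, fun x hx => ?_, fun x hx => ?_⟩
  · rw [hlin, hcoord x (hBS hx), if_pos hx]
  · rw [hlin, hcoord x hx.1, if_neg hx.2]; ring

lemma convexHull_extremePoints_eq {E : Type*} [AddCommGroup E] [Module ℝ E] [TopologicalSpace E]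
    [T2Space E] [IsTopologicalAddGroup E] [ContinuousSMul ℝ E] [LocallyConvexSpace ℝ E]
    {A : Set E} (hc : IsCompact A) (hA : Convex ℝ A) (hfin : (A.extremePoints ℝ).Finite) :
    convexHull ℝ (A.extremePoints ℝ) = A := by
  simpa [(hfin.isClosed_convexHull ℝ).closure_eq] using closure_convexHull_extremePoints hc hA

section Faces

variable {N : ℕ} {P F G : Set (Euc N)}

lemma verts_convexHull_of_subset_verts {A : Set (Euc N)} (hP : Convex ℝ P) (hA : A ⊆ verts P) :
    verts (convexHull ℝ A) = A :=
  subset_antisymm extremePoints_convexHull_subset fun _ hx =>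
    inter_extremePoints_subset_extremePoints_of_subset
      (convexHull_min (hA.trans extremePoints_subset) hP) ⟨subset_convexHull ℝ A hx, hA hx⟩

namespace IsPolytope

lemma finite_verts (hP : IsPolytope P) : (verts P).Finite := by
  obtain ⟨A, hA, rfl⟩ := hP
  exact hA.subset extremePoints_convexHull_subset

lemma convex (hP : IsPolytope P) : Convex ℝ P := by
  obtain ⟨A, -, rfl⟩ := hP
  exact convex_convexHull ℝ A

lemma isCompact (hP : IsPolytope P) : IsCompact P := by
  obtain ⟨A, hA, rfl⟩ := hP
  exact hA.isCompact_convexHull ℝ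

lemma convexHull_verts (hP : IsPolytope P) : convexHull ℝ (verts P) = P :=
  convexHull_extremePoints_eq hP.isCompact hP.convex hP.finite_verts

end IsPolytope

namespace IsProperFace

lemma nonempty (hF : IsProperFace P F) : F.Nonempty := by
  obtain ⟨l, c, -, -, hx, rfl⟩ := hF
  exact hx

lemma convex (hP : Convex ℝ P) (hF : IsProperFace P F) : Convex ℝ F := by
  obtain ⟨l, c, -, -, -, rfl⟩ := hF
  exact hP.inter (convex_hyperplane l.isLinear c)

lemma isExtreme (hF : IsProperFace P F) : IsExtreme ℝ P F := by
  obtain ⟨l, c, -, hlP, ⟨x₀, hx₀P, hx₀⟩, rfl⟩ := hF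
  refine IsExposed.isExtreme fun _ => ⟨LinearMap.toContinuousLinearMap l, ?_⟩
  ext x
  simp only [LinearMap.coe_toContinuousLinearMap', Set.mem_ofPred_eq]
  exact and_congr_right fun hx => ⟨fun hxc y hy => hxc ▸ hlP y hy,
    fun hmax => le_antisymm (hlP x hx) (hx₀ ▸ hmax x₀ hx₀P)⟩

lemma verts_eq (hF : IsProperFace P F) : verts F = F ∩ verts P :=
  hF.isExtreme.extremePoints_eq

lemma verts_subset (hF : IsProperFace P F) : verts F ⊆ verts P :=
  hF.verts_eq ▸ inter_subset_right

lemma isPolytope (hP : IsPolytope P) (hF : IsProperFace P F) : IsPolytope F := by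
  have hcompact : IsCompact F := by
    obtain ⟨l, c, -, -, -, rfl⟩ := hF
    exact hP.isCompact.inter_right (isClosed_eq l.continuous_of_finiteDimensional continuous_const)
  exact ⟨verts F, hP.finite_verts.subset hF.verts_subset,
    (convexHull_extremePoints_eq hcompact (hF.convex hP.convex)
      (hP.finite_verts.subset hF.verts_subset)).symm⟩

lemma convexHull_verts (hP : IsPolytope P) (hF : IsProperFace P F) :
    convexHull ℝ (verts F) = F :=
  (hF.isPolytope hP).convexHull_verts

lemma disjoint_convexHull (hF : IsProperFace P F) {Z : Set (Euc N)} (hZ : Z ⊆ verts P)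
    (hdisj : Disjoint (verts F) Z) : Disjoint F (convexHull ℝ Z) := by
  have hvF := hF.verts_eq
  obtain ⟨l, c, -, hlP, -, rfl⟩ := hF
  refine disjoint_left.2 fun p hpF hpZ => ?_
  obtain ⟨z, hz, hzc⟩ := convexHull_nonempty_iff.1
    ⟨p, mem_convexHull_setOf_eq_of_le (fun z hz => hlP z (extremePoints_subset (hZ hz))) hpZ hpF.2⟩
  exact disjoint_left.1 hdisj (hvF ▸ ⟨⟨extremePoints_subset (hZ hz), hzc⟩, hZ hz⟩) hz

/-- If `l` exposes `F` in `P` and `l'` exposes `G` in `F`, then `l + ε • l'` exposes `G` in `P`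
once `ε > 0` is small enough to keep the finitely many vertices of `P` off `F` below its level. -/
lemma trans (hP : IsPolytope P) (hF : IsProperFace P F) (hG : IsProperFace F G) :
    IsProperFace P G := by
  by_cases hGF : G = F
  · exact hGF ▸ hF
  obtain ⟨l, c, -, hlP, -, rfl⟩ := hF
  obtain ⟨l', c', -, hl'F, ⟨x₀, hx₀F, hx₀⟩, rfl⟩ := hG
  obtain ⟨ε, hε, hoff⟩ := exists_pos_forall_add_mul_neg (hP.finite_verts.sdiff (t := {x | l x = c}))
    (f := fun a => l a - c) (g := fun a => l' a - c')
    fun a ha => sub_neg.2 ((hlP a (extremePoints_subset ha.1)).lt_of_ne ha.2)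
  have hg : ∀ x, (l + ε • l') x = l x + ε * l' x := fun x => rfl
  have hvert : ∀ a ∈ verts P, (l + ε • l') a ≤ c + ε * c' ∧
      ((l + ε • l') a = c + ε * c' → l a = c ∧ l' a = c') := fun a ha => by
    by_cases hac : l a = c
    · have := hl'F a ⟨extremePoints_subset ha, hac⟩
      refine ⟨by rw [hg, hac]; nlinarith, fun h => ⟨hac, ?_⟩⟩
      rw [hg, hac] at h
      exact mul_left_cancel₀ hε.ne' (by linarith)
    · have := hoff a ⟨ha, hac⟩
      exact ⟨by rw [hg]; linarith, fun h => by rw [hg] at h; linarith⟩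
  have hgP : ∀ x ∈ P, (l + ε • l') x ≤ c + ε * c' :=
    hP.convexHull_verts ▸ forall_le_of_mem_convexHull fun a ha => (hvert a ha).1
  have heq : {x | x ∈ P ∧ (l + ε • l') x = c + ε * c'} =
      {x | x ∈ {x | x ∈ P ∧ l x = c} ∧ l' x = c'} := by
    ext x
    refine ⟨fun ⟨hxP, hgx⟩ => ?_, fun ⟨⟨hxP, hlx⟩, hl'x⟩ => ⟨hxP, by rw [hg, hlx, hl'x]⟩⟩
    rw [← hP.convexHull_verts] at hxP
    refine convexHull_min (fun a ha => ?_)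
      ((hP.convex.inter (convex_hyperplane l.isLinear c)).inter
        (convex_hyperplane l'.isLinear c'))
      (mem_convexHull_setOf_eq_of_le (fun a ha => (hvert a ha).1) hxP hgx)
    obtain ⟨hla, hl'a⟩ := (hvert a ha.1).2 ha.2
    exact ⟨⟨extremePoints_subset ha.1, hla⟩, hl'a⟩
  have hx₀g : (l + ε • l') x₀ = c + ε * c' := by rw [hg, hx₀F.2, hx₀]
  -- a vanishing `l + ε • l'` would expose all of `P`, so `G` would contain `F`
  refine heq ▸ ⟨l + ε • l', c + ε * c', fun hzero => hGF ?_, hgP, ⟨x₀, hx₀F.1, hx₀g⟩, rfl⟩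
  have hc : c + ε * c' = 0 := by rw [← hx₀g, hzero]; rfl
  refine subset_antisymm (fun x hx => hx.1) fun x hx => ?_
  rw [← heq]
  exact ⟨hx.1, by rw [hzero, hc]; rfl⟩

lemma isProperFace_convexHull_of_affineIndependent (hP : IsPolytope P)
    (hF : IsProperFace P F) (hind : AffineIndependent ℝ ((↑) : verts F → Euc N))
    {C : Set (Euc N)} (hC : C ⊆ verts F) (hCne : C.Nonempty) :
    IsProperFace P (convexHull ℝ C) := by
  by_cases hCF : C = verts F
  · rwa [hCF, hF.convexHull_verts hP]
  obtain ⟨y, hyF, hyC⟩ := exists_of_ssubset (ssubset_of_subset_of_ne hC hCF)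
  obtain ⟨l, c, hlC, hloff⟩ := hind.exists_linearMap_eq_sub_one hC
  have hlF : ∀ x ∈ verts F, l x ≤ c := fun x hx => by
    by_cases hxC : x ∈ C
    · exact (hlC x hxC).le
    · rw [hloff x ⟨hx, hxC⟩]; linarith
  obtain ⟨x₀, hx₀⟩ := hCne
  refine hF.trans hP ⟨l, c, fun hl => ?_, ?_, ⟨x₀, extremePoints_subset (hC hx₀), hlC x₀ hx₀⟩, ?_⟩
  · have h₀ := hlC x₀ hx₀
    have h₁ := hloff y ⟨hyF, hyC⟩
    rw [hl, LinearMap.zero_apply] at h₀ h₁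
    linarith
  · rw [← hF.convexHull_verts hP]
    exact forall_le_of_mem_convexHull hlF
  · refine subset_antisymm (convexHull_min (fun x hx => ⟨extremePoints_subset (hC hx), hlC x hx⟩)
      ((hF.convex hP.convex).inter (convex_hyperplane l.isLinear c))) ?_
    rintro x ⟨hxF, hlx⟩
    rw [← hF.convexHull_verts hP] at hxF
    refine convexHull_mono (fun a ha => ?_) (mem_convexHull_setOf_eq_of_le hlF hxF hlx)
    by_contra haC
    linarith [ha.2, hloff a ⟨ha.1, haC⟩]

end IsProperFace

/-- A Radon partition `Z`, `B \ Z` of a dependent `B` has meeting hulls, so no face contains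
`Z` and misses `B \ Z`; either part may play `Z`, so only the smaller one has to be tested. -/
lemma IsPolytope.affineIndependent_of_forall_exists_face (hP : IsPolytope P)
    {B : Set (Euc N)} (hB : B ⊆ verts P)
    (hsep : ∀ Z ⊆ B, Z.Nonempty → 2 * Z.ncard ≤ B.ncard →
      ∃ F, IsProperFace P F ∧ Z ⊆ verts F ∧ Disjoint (verts F) (B \ Z)) :
    AffineIndependent ℝ ((↑) : B → Euc N) := by
  by_contra hdep
  obtain ⟨I, p, hp, hpc⟩ := Convex.radon_partition hdep
  rw [image_val_compl] at hpc
  have hsplit : ∀ Z ⊆ B, p ∈ convexHull ℝ Z → p ∈ convexHull ℝ (B \ Z) →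
      2 * Z.ncard ≤ B.ncard → False := fun Z hZB hpZ hpZ' hZ => by
    obtain ⟨F, hF, hZF, hdisj⟩ := hsep Z hZB (convexHull_nonempty_iff.1 ⟨p, hpZ⟩) hZ
    exact disjoint_left.1 (hF.disjoint_convexHull (sdiff_subset.trans hB) hdisj)
      (convexHull_min (hZF.trans extremePoints_subset) (hF.convex hP.convex) hpZ) hpZ'
  have hIB : Subtype.val '' I ⊆ B := Subtype.coe_image_subset B I
  have hcard := ncard_sdiff_add_ncard_of_subset hIB (hP.finite_verts.subset hB)
  rcases le_total (2 * (Subtype.val '' I).ncard) B.ncard with h | h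
  · exact hsplit _ hIB hp hpc h
  · exact hsplit _ sdiff_subset hpc (by rwa [sdiff_sdiff_cancel_left hIB]) (by omega)

lemma ncard_eq_finrank_vectorSpan_add_one {A : Set (Euc N)} (hfin : A.Finite)
    (hne : A.Nonempty) (hind : AffineIndependent ℝ ((↑) : A → Euc N)) :
    A.ncard = Module.finrank ℝ (vectorSpan ℝ A) + 1 := by
  have := hfin.fintype
  have := hne.to_subtype
  rw [← Nat.card_coe_set_eq, Nat.card_eq_fintype_card, ← hind.finrank_vectorSpan_add_one,
    Subtype.range_coe]

lemma pdim_eq_finrank_vectorSpan {A : Set (Euc N)} (hA : A.Nonempty) :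
    pdim A = Module.finrank ℝ (vectorSpan ℝ A) := by
  rw [pdim, if_neg hA.ne_empty, direction_affineSpan]

lemma pdim_convexHull_add_one {A : Set (Euc N)} (hfin : A.Finite) (hne : A.Nonempty)
    (hind : AffineIndependent ℝ ((↑) : A → Euc N)) :
    pdim (convexHull ℝ A) + 1 = A.ncard := by
  rw [pdim_eq_finrank_vectorSpan (convexHull_nonempty_iff.2 hne), ← direction_affineSpan,
    affineSpan_convexHull, direction_affineSpan, ncard_eq_finrank_vectorSpan_add_one hfin hne hind]
  push_cast
  rfl

namespace IsKNeighbourly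

variable {m : ℕ}

lemma affineIndependent_of_ncard_le_succ (hP : IsPolytope P) (hKN : IsKNeighbourly P m)
    (hcard : 2 * m + 1 ≤ (verts P).ncard) {B : Set (Euc N)} (hB : B ⊆ verts P)
    (hsize : B.ncard ≤ m + 1) : AffineIndependent ℝ ((↑) : B → Euc N) := by
  refine hP.affineIndependent_of_forall_exists_face hB fun Z hZB _ hZ => ?_
  have hrest : (B \ Z).ncard ≤ m + 1 :=
    (ncard_le_ncard sdiff_subset (hP.finite_verts.subset hB)).trans hsize
  have hroom := ncard_sdiff (sdiff_subset.trans hB : B \ Z ⊆ verts P)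
    (hP.finite_verts.subset (sdiff_subset.trans hB))
  obtain ⟨D, hZD, hD, hDcard⟩ := exists_subsuperset_card_eq (n := m) (t := verts P \ (B \ Z))
    (subset_sdiff.2 ⟨hZB.trans hB, disjoint_sdiff_right⟩) (by omega) (by omega)
  obtain ⟨F, hF, rfl⟩ := hKN D (hD.trans sdiff_subset) hDcard
  exact ⟨F, hF, hZD, (subset_sdiff.1 hD).2⟩

lemma isProperFace_convexHull (hP : IsPolytope P) (hKN : IsKNeighbourly P m)
    (hcard : 2 * m + 1 ≤ (verts P).ncard) {B : Set (Euc N)} (hB : B ⊆ verts P)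
    (hBne : B.Nonempty) (hsize : B.ncard ≤ m) : IsProperFace P (convexHull ℝ B) := by
  obtain ⟨D, hBD, hD, hDcard⟩ := exists_subsuperset_card_eq hB hsize (by omega)
  obtain ⟨F, hF, rfl⟩ := hKN D hD hDcard
  exact hF.isProperFace_convexHull_of_affineIndependent hP
    (hKN.affineIndependent_of_ncard_le_succ hP hcard hD (by omega)) hBD hBne

lemma affineIndependent_of_ncard_le (hP : IsPolytope P) (hKN : IsKNeighbourly P m)
    (hcard : 2 * m + 1 ≤ (verts P).ncard) {B : Set (Euc N)} (hB : B ⊆ verts P)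
    (hsize : B.ncard ≤ 2 * m + 1) : AffineIndependent ℝ ((↑) : B → Euc N) := by
  refine hP.affineIndependent_of_forall_exists_face hB fun Z hZB hZne hZ => ?_
  have hverts := verts_convexHull_of_subset_verts hP.convex (hZB.trans hB)
  exact ⟨convexHull ℝ Z, hKN.isProperFace_convexHull hP hcard (hZB.trans hB) hZne (by omega),
    hverts.superset, by rw [hverts]; exact disjoint_sdiff_right⟩

lemma ncard_verts_of_pdim_eq (hP : IsPolytope P) (hKN : IsKNeighbourly P m)
    (hcard : 2 * m + 1 ≤ (verts P).ncard) (hG : IsProperFace P G) {j : ℕ}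
    (hdim : pdim G = j) (hj : j < 2 * m) :
    (verts G).ncard = j + 1 ∧ AffineIndependent ℝ ((↑) : verts G → Euc N) := by
  have hfin : (verts G).Finite := hP.finite_verts.subset hG.verts_subset
  have hle : (verts G).ncard ≤ j + 1 := by
    by_contra! hlt
    obtain ⟨B, hBG, hBcard⟩ := exists_subset_card_eq (n := j + 2) hlt
    have hBind := hKN.affineIndependent_of_ncard_le hP hcard (hBG.trans hG.verts_subset)
      (by omega)
    have hBrank := ncard_eq_finrank_vectorSpan_add_one (hfin.subset hBG)
      (nonempty_of_ncard_ne_zero (by omega)) hBind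
    have hmono := Submodule.finrank_mono (vectorSpan_mono ℝ (hBG.trans extremePoints_subset))
    rw [pdim_eq_finrank_vectorSpan hG.nonempty] at hdim
    omega
  have hind := hKN.affineIndependent_of_ncard_le hP hcard hG.verts_subset (by omega)
  refine ⟨?_, hind⟩
  have hvne : (verts G).Nonempty := by
    rw [← convexHull_nonempty_iff (𝕜 := ℝ), hG.convexHull_verts hP]
    exact hG.nonempty
  have := pdim_convexHull_add_one hfin hvne hind
  rw [hG.convexHull_verts hP, hdim] at this
  omega

end IsKNeighbourly

end Faces

section Quotient

variable {N M : ℕ} {P U V : Set (Euc N)} {Q : Set (Euc M)} {φ : Euc N → Euc M}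

lemma IsFaceOf.isProperFace {F : Set (Euc N)} (hF : IsFaceOf P F) (hne : (verts F).Nonempty)
    (hFP : verts F ≠ verts P) : IsProperFace P F := by
  rcases hF with rfl | rfl | hF
  · simp [verts, extremePoints_empty] at hne
  · exact absurd rfl hFP
  · exact hF

lemma IsProperFace.verts_subset_verts (hU : IsProperFace P U) (hV : IsProperFace P V)
    (hUV : U ⊆ V) : verts U ⊆ verts V := by
  rw [hV.verts_eq]
  exact fun x hx => ⟨hUV (extremePoints_subset hx), hU.verts_subset hx⟩

namespace IsQuotient

lemma isProperFace_convexHull_iff (hQ : IsQuotient P U Q φ) (hP : IsPolytope P)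
    (hU : IsProperFace P U) {W : Set (Euc N)} (hW : W ⊆ verts P \ verts U) (hWne : W.Nonempty)
    (hWP : W ∪ verts U ≠ verts P) :
    IsProperFace P (convexHull ℝ (W ∪ verts U)) ↔ IsProperFace Q (convexHull ℝ (φ '' W)) := by
  obtain ⟨hQpoly, hφ, hfaces⟩ := hQ
  have hWU : W ∪ verts U ⊆ verts P := union_subset (hW.trans sdiff_subset) hU.verts_subset
  constructor
  · intro hF
    have hUF : U ⊆ convexHull ℝ (W ∪ verts U) :=
      (hU.convexHull_verts hP).superset.trans (convexHull_mono subset_union_right)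
    obtain ⟨F', hF', hF'verts⟩ := (hfaces W hW).1
      ⟨_, Or.inr (Or.inr hF), hUF, verts_convexHull_of_subset_verts hP.convex hWU⟩
    have hWQ : φ '' W ≠ verts Q := fun h => hWP <| by
      rw [← hφ.image_eq, hφ.injOn.image_eq_image_iff hW subset_rfl] at h
      rw [h, sdiff_union_of_subset hU.verts_subset]
    have hF'proper := hF'.isProperFace (hF'verts ▸ hWne.image φ) (hF'verts ▸ hWQ)
    rwa [← hF'proper.convexHull_verts hQpoly, hF'verts] at hF'proper
  · intro hF'
    obtain ⟨F, hF, -, hFverts⟩ := (hfaces W hW).2 ⟨_, Or.inr (Or.inr hF'),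
      verts_convexHull_of_subset_verts hQpoly.convex (hφ.image_eq ▸ image_mono hW)⟩
    have hFproper := hF.isProperFace (hFverts ▸ hWne.mono subset_union_left) (hFverts ▸ hWP)
    rwa [← hFproper.convexHull_verts hP, hFverts] at hFproper

variable (hQ : IsQuotient P U Q φ) (hP : IsPolytope P) (hU : IsProperFace P U)
  (hV : IsProperFace P V) (hUV : verts U ⊆ verts V)
include hQ hP hU hV hUV

lemma isProperFace_convexHull_union_iff (hVU : (verts V \ verts U).Nonempty)
    {S : Set (Euc N)} (hS : S ⊆ verts P \ verts U) (hSV : S ∪ verts V ≠ verts P) :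
    IsProperFace P (convexHull ℝ (S ∪ V)) ↔
      IsProperFace Q (convexHull ℝ (φ '' S ∪ convexHull ℝ (φ '' (verts V \ verts U)))) := by
  have hW : S ∪ (verts V \ verts U) ⊆ verts P \ verts U :=
    union_subset hS (sdiff_subset_sdiff_left hV.verts_subset)
  have hWU : S ∪ (verts V \ verts U) ∪ verts U = S ∪ verts V := by
    rw [union_assoc, sdiff_union_of_subset hUV]
  have hPside : convexHull ℝ (S ∪ V) = convexHull ℝ (S ∪ (verts V \ verts U) ∪ verts U) := by
    conv_lhs => rw [← hV.convexHull_verts hP]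
    rw [convexHull_convexHull_union_right, hWU]
  rw [hPside, convexHull_convexHull_union_right, ← image_union]
  exact hQ.isProperFace_convexHull_iff hP hU hW (hVU.mono subset_union_right) (hWU ▸ hSV)

lemma isProperFace_convexHull_image (hVU : (verts V \ verts U).Nonempty)
    (hVP : verts V ≠ verts P) :
    IsProperFace Q (convexHull ℝ (φ '' (verts V \ verts U))) := by
  have := (hQ.isProperFace_convexHull_union_iff hP hU hV hUV hVU (empty_subset _)
    (by rwa [empty_union])).1 (by rwa [empty_union, (hV.convex hP.convex).convexHull_eq])
  rwa [image_empty, empty_union, (convex_convexHull ℝ _).convexHull_eq] at this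

lemma affineIndependent_image (hVind : AffineIndependent ℝ ((↑) : verts V → Euc N))
    (hVP : verts V ≠ verts P) :
    AffineIndependent ℝ ((↑) : φ '' (verts V \ verts U) → Euc M) := by
  have hφ := hQ.2.1
  have hW₀ : verts V \ verts U ⊆ verts P \ verts U := sdiff_subset_sdiff_left hV.verts_subset
  refine hQ.1.affineIndependent_of_forall_exists_face (hφ.image_eq ▸ image_mono hW₀)
    fun Z hZ hZne _ => ?_
  obtain ⟨W, hW, rfl⟩ := subset_image_iff.1 hZ
  have hWU : W ∪ verts U ⊆ verts V := union_subset (hW.trans sdiff_subset) hUV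
  have hface := hV.isProperFace_convexHull_of_affineIndependent hP hVind hWU
    (hZne.of_image.mono subset_union_left)
  have hφW : φ '' W ⊆ verts Q := hφ.image_eq ▸ image_mono (hW.trans hW₀)
  have hverts := verts_convexHull_of_subset_verts hQ.1.convex hφW
  refine ⟨_, (hQ.isProperFace_convexHull_iff hP hU (hW.trans hW₀) hZne.of_image
    fun h => hVP (subset_antisymm hV.verts_subset (h ▸ hWU))).1 hface, hverts.superset, ?_⟩
  rw [hverts]
  exact disjoint_sdiff_right

lemma pdim_convexHull_image_add_one (hVind : AffineIndependent ℝ ((↑) : verts V → Euc N))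
    (hVU : (verts V \ verts U).Nonempty) (hVP : verts V ≠ verts P) :
    pdim (convexHull ℝ (φ '' (verts V \ verts U))) + 1 = (verts V \ verts U).ncard := by
  have hW₀ : verts V \ verts U ⊆ verts P \ verts U := sdiff_subset_sdiff_left hV.verts_subset
  rw [pdim_convexHull_add_one ((hP.finite_verts.subset (hW₀.trans sdiff_subset)).image φ)
    (hVU.image φ) (hQ.affineIndependent_image hP hU hV hUV hVind hVP),
    (hQ.2.1.injOn.mono hW₀).ncard_image]

lemma forall_isProperFace_convexHull_union_iff (hVU : (verts V \ verts U).Nonempty) {r : ℕ}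
    (hsmall : ∀ S : Set (Euc N), S.ncard ≤ r → S ∪ verts V ≠ verts P) :
    (∀ S ⊆ verts P, S.ncard ≤ r → IsProperFace P (convexHull ℝ (S ∪ V))) ↔
      ∀ T ⊆ verts Q, T.ncard ≤ r →
        IsProperFace Q (convexHull ℝ (T ∪ convexHull ℝ (φ '' (verts V \ verts U)))) := by
  have hφ := hQ.2.1
  have hlink := fun S (hS : S ⊆ verts P \ verts U) hScard =>
    hQ.isProperFace_convexHull_union_iff hP hU hV hUV hVU hS (hsmall S hScard)
  constructor
  · intro hVuniv T hT hTcard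
    obtain ⟨S, hS, rfl⟩ := subset_image_iff.1 (hφ.image_eq ▸ hT)
    rw [(hφ.injOn.mono hS).ncard_image] at hTcard
    exact (hlink S hS hTcard).1 (hVuniv S (hS.trans sdiff_subset) hTcard)
  · intro hXuniv S hS hScard
    have hS' : S \ verts U ⊆ verts P \ verts U := sdiff_subset_sdiff_left hS
    have hS'card : (S \ verts U).ncard ≤ r :=
      (ncard_le_ncard sdiff_subset (hP.finite_verts.subset hS)).trans hScard
    have hSV : S \ verts U ∪ V = S ∪ V := by
      rw [← union_eq_self_of_subset_left (hUV.trans extremePoints_subset), ← union_assoc,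
        sdiff_union_self, union_assoc]
    rw [← hSV]
    exact (hlink _ hS' hS'card).2 (hXuniv _ (hφ.image_eq ▸ image_mono hS')
      ((hφ.injOn.mono hS').ncard_image ▸ hS'card))

end IsQuotient

end Quotient

theorem statement_0_general {m k n N' : ℕ}
    (P U V : Set (Euc (2 * m))) (Q : Set (Euc N')) (φ : Euc (2 * m) → Euc N')
    (hP : IsNeighbourly (2 * m) P) (hcard : 2 * m + 3 ≤ (verts P).ncard)
    (hU : IsUniversalFace (2 * m) P U k)
    (hV : IsFaceOfDim P V (n : ℤ)) (hUV : U ⊆ V)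
    (hkn : k < n) (hn : n ≤ 2 * m - 1)
    (hQ : IsQuotient P U Q φ) :
    IsUniversalFace (2 * m) P V n ↔
      IsUniversalFace (2 * m - k - 1) Q
        (convexHull ℝ (φ '' (verts V \ verts U))) (n - k - 1) := by
  obtain ⟨hPpoly, -, hKN⟩ := hP
  rw [show 2 * m / 2 = m by omega] at hKN
  obtain ⟨⟨hUface, hUdim⟩, -⟩ := hU
  obtain ⟨hVface, hVdim⟩ := hV
  obtain ⟨hVcard, hVind⟩ := hKN.ncard_verts_of_pdim_eq hPpoly (by omega) hVface hVdim (by omega)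
  obtain ⟨hUcard, -⟩ := hKN.ncard_verts_of_pdim_eq hPpoly (by omega) hUface hUdim (by omega)
  have hUV' := hUface.verts_subset_verts hVface hUV
  have hW₀card : (verts V \ verts U).ncard = n - k := by
    rw [ncard_sdiff hUV' (hPpoly.finite_verts.subset hUface.verts_subset), hVcard, hUcard]
    omega
  have hW₀ne : (verts V \ verts U).Nonempty := nonempty_of_ncard_ne_zero (by omega)
  have hsmall : ∀ S : Set (Euc (2 * m)), S.ncard ≤ (2 * m - n - 1) / 2 → S ∪ verts V ≠ verts P :=
    fun S hS h => by have := h ▸ ncard_union_le S (verts V); omega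
  have hVP : verts V ≠ verts P := by simpa using hsmall ∅ (by simp)
  have hlevel : 2 * m - k - 1 - (n - k - 1) - 1 = 2 * m - n - 1 := by omega
  have hdim := hQ.pdim_convexHull_image_add_one hPpoly hUface hVface hUV' hVind hW₀ne hVP
  have huniv := hQ.forall_isProperFace_convexHull_union_iff hPpoly hUface hVface hUV' hW₀ne hsmall
  rw [IsUniversalFace, IsUniversalFace, hlevel, IsFaceOfDim, ← huniv]
  refine ⟨fun ⟨_, hVuniv⟩ => ⟨⟨?_, by omega⟩, hVuniv⟩, fun ⟨_, hVuniv⟩ => ⟨⟨hVface, hVdim⟩, hVuniv⟩⟩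
  exact hQ.isProperFace_convexHull_image hPpoly hUface hVface hUV' hW₀ne hVP

/-- Let `P` be a neighbourly `2m`-polytope (`m > 1`) with at least `2m+3`
vertices, `U` a universal `k`-face of `P`, and `V` an `n`-face of `P` with `U ⊆ V` and
`0 ≤ k < n ≤ 2m-1`. Then `V` is a universal `n`-face of `P` iff `V/U` is a universal
`(n-k-1)`-face of the quotient polytope `P/U`. -/
theorem statement_0 {m k n N' : ℕ} (hm : 1 < m)
    (P U V : Set (Euc (2 * m))) (Q : Set (Euc N')) (φ : Euc (2 * m) → Euc N')
    (hP : IsNeighbourly (2 * m) P) (hcard : 2 * m + 3 ≤ (verts P).ncard)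
    (hU : IsUniversalFace (2 * m) P U k)
    (hV : IsFaceOfDim P V (n : ℤ)) (hUV : U ⊆ V)
    (hkn : k < n) (hn : n ≤ 2 * m - 1)
    (hQ : IsQuotient P U Q φ) :
    IsUniversalFace (2 * m) P V n ↔
      IsUniversalFace (2 * m - k - 1) Q
        (convexHull ℝ (φ '' (verts V \ verts U))) (n - k - 1) :=
  statement_0_general P U V Q φ hP hcard hU hV hUV hkn hn hQ
end
end

section
/- Let C be a cyclic 2ℓ-polytope with 2ℓ+2 vertices. Then C has exactly two missing faces, i.e. |ℳ(C)| = 2; the two missing faces are disjoint, and each has exactly ℓ+1 vertices. -/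
open Set

noncomputable section

/-!
The `d + 2` points `g i = momentCurve d (u i)` satisfy a single affine dependence, whose
coefficients are the Lagrange nodal weights `λ i = ∏_{j ≠ i} (u i - u j)⁻¹`: for every linear `L`
the map `t ↦ L (momentCurve d t)` is a polynomial of degree `≤ d`, so its divided difference of
order `d + 1` vanishes, i.e. `∑ i, λ i * (c - L (g i)) = 0`. Hence a supporting hyperplane `L = c`
through all points of one sign class of `λ` passes through every `g i`, which forces `L = 0`.
Conversely, if `S` misses an index of each sign, pick values `r ≥ 0` vanishing exactly on `S` with
`∑ i, λ i * r i = 0`; their interpolating polynomial has degree `≤ d` and exposes `conv (g '' S)`.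
So the missing faces are the two sign classes, and for increasing `u` with `d = 2ℓ` these are the
points of even and of odd index.
-/

open Polynomial Lagrange

lemma sep_convexHull_eq_convexHull_sep {E : Type*} [AddCommGroup E] [Module ℝ E] {s : Set E}
    {ℓ : E →ₗ[ℝ] ℝ} {c : ℝ} (hs : ∀ x ∈ s, ℓ x ≤ c) :
    {x ∈ convexHull ℝ s | ℓ x = c} = convexHull ℝ {x ∈ s | ℓ x = c} := by
  classical
  apply Subset.antisymm
  · rintro _ ⟨hx, hxc⟩
    obtain ⟨ι, t, w, z, hw₀, hw₁, hz, rfl⟩ := (convexHull_eq s).subset hx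
    have hℓ : ℓ (t.centerMass w z) = ∑ i ∈ t, w i * ℓ (z i) := by
      simp [Finset.centerMass_eq_of_sum_1 _ _ hw₁]
    have hterm : ∀ i ∈ t, w i * (c - ℓ (z i)) = 0 := by
      refine (Finset.sum_eq_zero_iff_of_nonneg fun i hi =>
        mul_nonneg (hw₀ i hi) (sub_nonneg.mpr (hs _ (hz i hi)))).mp ?_
      simp only [mul_sub, Finset.sum_sub_distrib, ← Finset.sum_mul, hw₁, one_mul, ← hℓ, hxc,
        sub_self]
    rw [← Finset.centerMass_filter_ne_zero]
    refine Finset.centerMass_mem_convexHull _ (fun i hi => hw₀ i (Finset.mem_filter.mp hi).1)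
      (by rw [Finset.sum_filter_ne_zero, hw₁]; exact one_pos) fun i hi => ?_
    obtain ⟨hi, hwi⟩ := Finset.mem_filter.mp hi
    exact ⟨hz i hi, (sub_eq_zero.mp ((mul_eq_zero.mp (hterm i hi)).resolve_left hwi)).symm⟩
  · refine convexHull_min (fun x hx => ⟨subset_convexHull ℝ s hx.1, hx.2⟩) ?_
    exact (convex_convexHull ℝ s).inter (convex_hyperplane ℓ.isLinear c)

lemma exists_pos_sum_mul_eq_zero {ι : Type*} {s : Finset ι} {w : ι → ℝ} {a b : ι} (ha : a ∈ s)
    (hb : b ∈ s) (hwa : w a < 0) (hwb : 0 < w b) :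
    ∃ r : ι → ℝ, (∀ i ∈ s, 0 < r i) ∧ ∑ i ∈ s, r i * w i = 0 := by
  classical
  wlog hσ : 0 ≤ ∑ i ∈ s, w i generalizing w a b
  · obtain ⟨r, hr, hsum⟩ := this (w := -w) hb ha (by simpa) (by simpa) (by simp; linarith)
    exact ⟨r, hr, by simpa using hsum⟩
  refine ⟨fun i => 1 + if i = a then (∑ i ∈ s, w i) / -w a else 0, fun i _ => ?_, ?_⟩
  · have : 0 ≤ (∑ i ∈ s, w i) / -w a := div_nonneg hσ (by linarith)
    dsimp only
    split_ifs <;> linarith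
  · simp only [add_mul, one_mul, ite_mul, zero_mul, Finset.sum_add_distrib, Finset.sum_ite_eq', ha,
      if_true]
    field_simp [hwa.ne]
    ring

section MomentCurve

variable {d : ℕ}

lemma momentCurve_apply (t : ℝ) (i : Fin d) : momentCurve d t i = t ^ ((i : ℕ) + 1) := rfl

lemma exists_linearMap_momentCurve_eq (q : ℝ[X]) (hq : q.natDegree ≤ d) :
    ∃ L : Euc d →ₗ[ℝ] ℝ, ∀ t, L (momentCurve d t) = q.eval t - q.coeff 0 := by
  refine ⟨∑ i : Fin d, q.coeff ((i : ℕ) + 1) • EuclideanSpace.projₗ i, fun t => ?_⟩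
  rw [eval_eq_sum_range' (Nat.lt_succ_of_le hq), Finset.sum_range_succ',
    ← Fin.sum_univ_eq_sum_range]
  simp [momentCurve_apply]

def momentPoly (L : Euc d →ₗ[ℝ] ℝ) : ℝ[X] :=
  ∑ i : Fin d, C (L (EuclideanSpace.single i 1)) * X ^ ((i : ℕ) + 1)

lemma eval_momentPoly (L : Euc d →ₗ[ℝ] ℝ) (t : ℝ) :
    (momentPoly L).eval t = L (momentCurve d t) := by
  conv_rhs => rw [← (EuclideanSpace.basisFun (Fin d) ℝ).sum_repr (momentCurve d t)]
  simp only [momentPoly, eval_finsetSum, eval_mul, eval_C, eval_pow, eval_X, map_sum, map_smul,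
    EuclideanSpace.basisFun_repr, EuclideanSpace.basisFun_apply, momentCurve_apply, smul_eq_mul,
    mul_comm]

lemma natDegree_momentPoly_le (L : Euc d →ₗ[ℝ] ℝ) : (momentPoly L).natDegree ≤ d :=
  natDegree_sum_le_of_forall_le _ _ fun i _ =>
    (natDegree_C_mul_X_pow_le _ _).trans (Nat.succ_le_of_lt i.isLt)

lemma coeff_momentPoly_succ (L : Euc d →ₗ[ℝ] ℝ) (i : Fin d) :
    (momentPoly L).coeff ((i : ℕ) + 1) = L (EuclideanSpace.single i 1) := by
  simp [momentPoly, finsetSum_coeff, Fin.val_inj]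

lemma linearMap_eq_zero_of_momentCurve_eq_const {ι : Type*} [Fintype ι] {u : ι → ℝ}
    (hu : Function.Injective u) (hn : d < Fintype.card ι) {L : Euc d →ₗ[ℝ] ℝ} {c : ℝ}
    (hL : ∀ i, L (momentCurve d (u i)) = c) : L = 0 := by
  have hconst : momentPoly L - C c = 0 := by
    refine eq_zero_of_natDegree_lt_card_of_eval_eq_zero _ hu (fun i => ?_) ?_
    · simp [eval_momentPoly, hL]
    · rw [natDegree_sub_C]
      exact (natDegree_momentPoly_le L).trans_lt hn
  refine (EuclideanSpace.basisFun (Fin d) ℝ).toBasis.ext fun i => ?_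
  have := congrArg (coeff · ((i : ℕ) + 1)) hconst
  simpa [coeff_momentPoly_succ, coeff_C] using this

end MomentCurve

lemma isProperFace_of_poly_nonneg {d : ℕ} {ι : Type*} (u : ι → ℝ) {q : ℝ[X]}
    (hq : q.natDegree ≤ d) (hnn : ∀ i, 0 ≤ q.eval (u i)) {i₀ i₁ : ι} (h₀ : q.eval (u i₀) = 0)
    (h₁ : 0 < q.eval (u i₁)) :
    IsProperFace (convexHull ℝ (range fun i => momentCurve d (u i)))
      (convexHull ℝ ((fun i => momentCurve d (u i)) '' {i | q.eval (u i) = 0})) := by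
  obtain ⟨L, hL⟩ := exists_linearMap_momentCurve_eq q hq
  have hval : ∀ i, (-L) (momentCurve d (u i)) = q.coeff 0 - q.eval (u i) := by simp [hL]
  have hle : ∀ x ∈ range fun i => momentCurve d (u i), (-L) x ≤ q.coeff 0 := by
    rintro _ ⟨i, rfl⟩
    linarith [hval i, hnn i]
  refine ⟨-L, q.coeff 0, fun h => ?_, fun x hx => ?_, ?_, ?_⟩
  · have e₀ := hval i₀
    have e₁ := hval i₁
    simp only [h, LinearMap.zero_apply, h₀] at e₀ e₁
    linarith
  · exact convexHull_min hle (convex_halfSpace_le (-L).isLinear _) hx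
  · exact ⟨_, subset_convexHull ℝ _ ⟨i₀, rfl⟩, by rw [hval, h₀, sub_zero]⟩
  · rw [sep_convexHull_eq_convexHull_sep hle]
    congr 1
    ext x
    simp only [Set.mem_image, Set.mem_ofPred_eq, Set.mem_range]
    constructor
    · rintro ⟨i, hi, rfl⟩
      exact ⟨⟨i, rfl⟩, by rw [hval, hi, sub_zero]⟩
    · rintro ⟨⟨i, rfl⟩, hi⟩
      exact ⟨i, by linarith [hval i], rfl⟩

section NodalWeight

variable {ι : Type*} [Fintype ι] [DecidableEq ι] {d : ℕ} {u : ι → ℝ}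

lemma coeff_eq_sum_nodalWeight_mul_eval (hu : Function.Injective u)
    (hcard : Fintype.card ι = d + 2) {p : ℝ[X]} (hp : p.degree < ↑(d + 2)) :
    p.coeff (d + 1) = ∑ i, nodalWeight Finset.univ u i * p.eval (u i) := by
  rw [show d + 1 = (Finset.univ : Finset ι).card - 1 by simp [hcard],
    coeff_eq_sum hu.injOn (by simpa [hcard])]
  simp [nodalWeight, Finset.prod_inv_distrib, div_eq_inv_mul]

lemma sum_nodalWeight_mul_eval_eq_zero (hu : Function.Injective u)
    (hcard : Fintype.card ι = d + 2) {p : ℝ[X]} (hp : p.natDegree ≤ d) :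
    ∑ i, nodalWeight Finset.univ u i * p.eval (u i) = 0 := by
  rw [← coeff_eq_sum_nodalWeight_mul_eval hu hcard]
  · exact coeff_eq_zero_of_natDegree_lt (by omega)
  · exact (degree_le_of_natDegree_le hp).trans_lt (by exact_mod_cast (by omega : d < d + 2))

lemma natDegree_interpolate_le (hu : Function.Injective u) (hcard : Fintype.card ι = d + 2)
    {r : ι → ℝ} (hr : ∑ i, nodalWeight Finset.univ u i * r i = 0) :
    (interpolate Finset.univ u r).natDegree ≤ d := by
  have hdeg := degree_interpolate_lt (s := Finset.univ) r hu.injOn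
  rw [Finset.card_univ, hcard] at hdeg
  rw [natDegree_le_iff_coeff_eq_zero]
  intro N hN
  rcases (Nat.succ_le_of_lt hN).eq_or_lt with rfl | hN
  · rw [coeff_eq_sum_nodalWeight_mul_eval hu hcard hdeg, ← hr]
    exact Finset.sum_congr rfl fun i _ => by
      rw [eval_interpolate_at_node r hu.injOn (Finset.mem_univ i)]
  · exact coeff_eq_zero_of_degree_lt (hdeg.trans_le (by exact_mod_cast hN))

end NodalWeight

lemma neg_one_pow_mul_nodalWeight_pos {n : ℕ} {u : Fin n → ℝ} (hu : StrictMono u) (i : Fin n) :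
    0 < (-1) ^ (n - 1 - i) * nodalWeight Finset.univ u i := by
  have hlo : (Finset.univ.erase i).filter (· < i) = Finset.Iio i := by
    ext j; simpa using fun h : j < i => h.ne
  have hhi : (Finset.univ.erase i).filter (¬ · < i) = Finset.Ioi i := by
    ext j; simp only [Finset.mem_filter, Finset.mem_erase, Finset.mem_univ, Finset.mem_Ioi]; grind
  have hneg : ∏ j ∈ Finset.Ioi i, (u i - u j)⁻¹ =
      (-1) ^ (n - 1 - i) * ∏ j ∈ Finset.Ioi i, (u j - u i)⁻¹ := by
    rw [← Fin.card_Ioi, ← Finset.prod_neg]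
    exact Finset.prod_congr rfl fun j _ => by rw [← inv_neg, neg_sub]
  have hsq : ((-1 : ℝ) ^ (n - 1 - i)) * (-1) ^ (n - 1 - i) = 1 := by
    rw [← mul_pow, neg_mul_neg, one_mul, one_pow]
  rw [nodalWeight, ← Finset.prod_filter_mul_prod_filter_not _ (· < i), hlo, hhi, hneg,
    mul_left_comm (∏ j ∈ Finset.Iio i, (u i - u j)⁻¹), ← mul_assoc, hsq, one_mul]
  refine mul_pos (Finset.prod_pos fun j hj => ?_) (Finset.prod_pos fun j hj => ?_)
  · exact inv_pos.mpr (sub_pos.mpr (hu (Finset.mem_Iio.mp hj)))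
  · exact inv_pos.mpr (sub_pos.mpr (hu (Finset.mem_Ioi.mp hj)))

section CyclicFaces

variable {d : ℕ} {ι : Type*} [Fintype ι] [DecidableEq ι] {u : ι → ℝ}

lemma exists_nodalWeight_neg_and_pos (hu : Function.Injective u)
    (hcard : Fintype.card ι = d + 2) :
    (∃ a, nodalWeight Finset.univ u a < 0) ∧ ∃ b, 0 < nodalWeight Finset.univ u b := by
  have hsum : ∑ i, nodalWeight Finset.univ u i = 0 := by
    simpa using sum_nodalWeight_mul_eval_eq_zero hu hcard (p := 1) (by simp)
  have hne : ∀ i, nodalWeight Finset.univ u i ≠ 0 := fun i =>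
    nodalWeight_ne_zero hu.injOn (Finset.mem_univ i)
  obtain ⟨i⟩ : Nonempty ι := Fintype.card_pos_iff.mp (by omega)
  constructor
  · by_contra! h
    exact hne i ((Finset.sum_eq_zero_iff_of_nonneg fun j _ => h j).mp hsum i (Finset.mem_univ i))
  · by_contra! h
    exact hne i ((Finset.sum_eq_zero_iff_of_nonpos fun j _ => h j).mp hsum i (Finset.mem_univ i))

lemma memBoundary_of_nodalWeight (hu : Function.Injective u) (hcard : Fintype.card ι = d + 2)
    {S : Set ι} {a b : ι} (ha : a ∉ S) (hb : b ∉ S) (hwa : nodalWeight Finset.univ u a < 0)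
    (hwb : 0 < nodalWeight Finset.univ u b) :
    MemBoundary (convexHull ℝ (range fun i => momentCurve d (u i)))
      (convexHull ℝ ((fun i => momentCurve d (u i)) '' S)) := by
  classical
  obtain ⟨r, hr, hsum⟩ := exists_pos_sum_mul_eq_zero (s := Finset.univ.filter (· ∉ S))
    (by simpa using ha) (by simpa using hb) hwa hwb
  set q := interpolate Finset.univ u fun i => if i ∈ S then 0 else r i
  have heval : ∀ i, q.eval (u i) = if i ∈ S then 0 else r i := fun i =>
    eval_interpolate_at_node _ hu.injOn (Finset.mem_univ i)
  have hq : q.natDegree ≤ d := by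
    refine natDegree_interpolate_le hu hcard ?_
    rw [Finset.sum_filter] at hsum
    refine Eq.trans (Finset.sum_congr rfl fun i _ => ?_) hsum
    split_ifs <;> simp [mul_comm]
  rcases S.eq_empty_or_nonempty with rfl | ⟨i₀, hi₀⟩
  · left
    simp
  right
  have hzero : {i | q.eval (u i) = 0} = S := by
    ext i
    by_cases hi : i ∈ S
    · simp [heval, hi]
    · simp [heval, hi, (hr i (by simpa using hi)).ne']
  rw [← hzero]
  refine isProperFace_of_poly_nonneg u hq (fun i => ?_) (i₀ := i₀) (i₁ := a) ?_ ?_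
  · rw [heval]
    split_ifs with hi
    exacts [le_rfl, (hr i (by simpa using hi)).le]
  · simp [heval, hi₀]
  · simpa [heval, ha] using hr a (by simpa using ha)

lemma not_memBoundary_of_nodalWeight (hu : Function.Injective u)
    (hcard : Fintype.card ι = d + 2) {S : Set ι} (hne : S.Nonempty) {ε : ℝ}
    (hS : ∀ i ∉ S, 0 < ε * nodalWeight Finset.univ u i) :
    ¬ MemBoundary (convexHull ℝ (range fun i => momentCurve d (u i)))
      (convexHull ℝ ((fun i => momentCurve d (u i)) '' S)) := by
  rintro (hempty | ⟨L, c, hL0, hle, -, hF⟩)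
  · simp [hne.ne_empty] at hempty
  have hle' : ∀ i, L (momentCurve d (u i)) ≤ c := fun i =>
    hle _ (subset_convexHull ℝ _ ⟨i, rfl⟩)
  have hSc : ∀ i ∈ S, L (momentCurve d (u i)) = c := fun i hi =>
    (hF.subset (subset_convexHull ℝ _ ⟨i, hi, rfl⟩)).2
  have hsum : ∑ i, ε * nodalWeight Finset.univ u i * (c - L (momentCurve d (u i))) = 0 := by
    have := sum_nodalWeight_mul_eval_eq_zero hu hcard (p := C c - momentPoly L)
      ((natDegree_sub_le _ _).trans (by simpa using natDegree_momentPoly_le L))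
    simp only [eval_sub, eval_C, eval_momentPoly] at this
    simp only [mul_assoc, ← Finset.mul_sum, this, mul_zero]
  have hterm := (Finset.sum_eq_zero_iff_of_nonneg fun i _ => ?_).mp hsum
  · refine hL0 (linearMap_eq_zero_of_momentCurve_eq_const hu (by omega) (c := c) fun i => ?_)
    by_cases hi : i ∈ S
    · exact hSc i hi
    · have := (mul_eq_zero.mp (hterm i (Finset.mem_univ i))).resolve_left (hS i hi).ne'
      linarith
  · by_cases hi : i ∈ S
    · simp [hSc i hi]
    · exact mul_nonneg (hS i hi).le (sub_nonneg.mpr (hle' i))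

theorem memBoundary_iff_nodalWeight (hu : Function.Injective u)
    (hcard : Fintype.card ι = d + 2) (S : Set ι) :
    MemBoundary (convexHull ℝ (range fun i => momentCurve d (u i)))
        (convexHull ℝ ((fun i => momentCurve d (u i)) '' S)) ↔
      ¬ {i | nodalWeight Finset.univ u i < 0} ⊆ S ∧
        ¬ {i | 0 < nodalWeight Finset.univ u i} ⊆ S := by
  obtain ⟨⟨a, ha⟩, ⟨b, hb⟩⟩ := exists_nodalWeight_neg_and_pos hu hcard
  have hne : ∀ i, nodalWeight Finset.univ u i ≠ 0 := fun i =>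
    nodalWeight_ne_zero hu.injOn (Finset.mem_univ i)
  refine ⟨fun h => ⟨fun hsub => ?_, fun hsub => ?_⟩, fun ⟨hE, hO⟩ => ?_⟩
  · refine not_memBoundary_of_nodalWeight hu hcard ⟨a, hsub ha⟩ (ε := 1) (fun i hi => ?_) h
    rw [one_mul]
    exact (not_lt.mp fun h => hi (hsub h)).lt_of_ne (hne i).symm
  · refine not_memBoundary_of_nodalWeight hu hcard ⟨b, hsub hb⟩ (ε := -1) (fun i hi => ?_) h
    rw [neg_one_mul, neg_pos]
    exact (not_lt.mp fun h => hi (hsub h)).lt_of_ne (hne i)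
  · obtain ⟨a', ha'E, ha'S⟩ := Set.not_subset.mp hE
    obtain ⟨b', hb'O, hb'S⟩ := Set.not_subset.mp hO
    exact memBoundary_of_nodalWeight hu hcard ha'S hb'S ha'E hb'O

end CyclicFaces

lemma verts_empty {N : ℕ} : verts (∅ : Set (Euc N)) = ∅ := extremePoints_empty

section MissingFaces

variable {N : ℕ} {ι : Type*} {P : Set (Euc N)} {g : ι → Euc N} {E O : Set ι}

lemma isMissingFace_image (hv : verts P = range g) (hg : Function.Injective g)
    (hface : ∀ S, MemBoundary P (convexHull ℝ (g '' S)) ↔ ¬ E ⊆ S ∧ ¬ O ⊆ S) (hOE : ¬ O ⊆ E) :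
    IsMissingFace P (g '' E) := by
  refine ⟨by simp [verts_empty, hv], by simp [hface], fun A hA => ?_⟩
  have hAg : A ⊆ range g := hA.subset.trans (image_subset_range g E)
  rw [← image_preimage_eq_of_subset hAg] at hA ⊢
  have hAE : g ⁻¹' A ⊂ E :=
    (hg.injOn (s := univ)).image_ssubset_image_iff (subset_univ _) (subset_univ _) |>.mp hA
  rw [union_empty, hface]
  exact ⟨fun h => hAE.not_subset h, fun h => hOE (h.trans hAE.subset)⟩

lemma isMissingFace_iff (hv : verts P = range g) (hg : Function.Injective g)
    (hface : ∀ S, MemBoundary P (convexHull ℝ (g '' S)) ↔ ¬ E ⊆ S ∧ ¬ O ⊆ S) (hEO : ¬ E ⊆ O)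
    (hOE : ¬ O ⊆ E) (A : Set (Euc N)) : IsMissingFace P A ↔ A = g '' E ∨ A = g '' O := by
  have hface' : ∀ S, MemBoundary P (convexHull ℝ (g '' S)) ↔ ¬ O ⊆ S ∧ ¬ E ⊆ S := fun S =>
    (hface S).trans and_comm
  refine ⟨fun ⟨hA, hnot, hmin⟩ => ?_, ?_⟩
  · rw [verts_empty, sdiff_empty, hv] at hA
    rw [union_empty, ← image_preimage_eq_of_subset hA, hface, not_and_or, not_not,
      not_not] at hnot
    have key : ∀ {F}, F ⊆ g ⁻¹' A → ¬ MemBoundary P (convexHull ℝ (g '' F)) → A = g '' F :=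
      fun {F} hF hF' =>
        ((image_mono hF).trans_eq (image_preimage_eq_of_subset hA)).eq_or_ssubset.elim
          Eq.symm fun h => absurd (by simpa using hmin _ h) hF'
    rcases hnot with hE | hO
    · exact Or.inl (key hE (by simp [hface]))
    · exact Or.inr (key hO (by simp [hface']))
  · rintro (rfl | rfl)
    exacts [isMissingFace_image hv hg hface hOE, isMissingFace_image hv hg hface' hEO]

end MissingFaces

section EvenCyclic

variable {l : ℕ} {u : Fin (2 * l + 2) → ℝ}

lemma nodalWeight_neg_iff (hu : StrictMono u) (i : Fin (2 * l + 2)) :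
    nodalWeight Finset.univ u i < 0 ↔ (i : ℕ) % 2 = 0 := by
  have h := neg_one_pow_mul_nodalWeight_pos hu i
  rcases Nat.mod_two_eq_zero_or_one i with hi | hi
  · rw [Odd.neg_one_pow (by rw [Nat.odd_iff]; omega), neg_one_mul, neg_pos] at h
    simp [h, hi]
  · rw [Even.neg_one_pow (by rw [Nat.even_iff]; omega), one_mul] at h
    simp [h.le, hi]

lemma nodalWeight_pos_iff (hu : StrictMono u) (i : Fin (2 * l + 2)) :
    0 < nodalWeight Finset.univ u i ↔ (i : ℕ) % 2 = 1 := by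
  rw [← not_iff_not, not_lt,
    (nodalWeight_ne_zero hu.injective.injOn (Finset.mem_univ i)).le_iff_lt, nodalWeight_neg_iff hu]
  omega

end EvenCyclic

lemma ncard_fin_mod_two_eq (l : ℕ) {p : ℕ} (hp : p < 2) :
    {i : Fin (2 * l + 2) | (i : ℕ) % 2 = p}.ncard = l + 1 := by
  have hrange : {i : Fin (2 * l + 2) | (i : ℕ) % 2 = p} =
      range fun j : Fin (l + 1) => (⟨2 * j + p, by omega⟩ : Fin (2 * l + 2)) := by
    ext i
    simp only [mem_ofPred_eq, mem_range, Fin.ext_iff]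
    refine ⟨fun h => ⟨⟨i / 2, by omega⟩, by simp only; omega⟩, ?_⟩
    rintro ⟨j, hj⟩
    omega
  rw [hrange, ncard_range_of_injective fun a b h => by simpa [Fin.ext_iff] using h, Nat.card_fin]

lemma verts_eq_range_of_ncard {N n : ℕ} {g : Fin n → Euc N}
    (h : (verts (convexHull ℝ (range g))).ncard = n) :
    verts (convexHull ℝ (range g)) = range g ∧ Function.Injective g := by
  have hle : (range g).ncard ≤ n := by
    rw [← image_univ]
    exact (ncard_image_le (finite_univ)).trans (by simp)
  have hv : verts (convexHull ℝ (range g)) = range g :=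
    eq_of_subset_of_ncard_le extremePoints_convexHull_subset (h.symm ▸ hle) (finite_range g)
  refine ⟨hv, injOn_univ.mp (injOn_of_ncard_image_eq ?_)⟩
  rw [image_univ, ← hv, h, ncard_univ, Nat.card_fin]

/-- A cyclic `2ℓ`-polytope with `2ℓ+2` vertices has exactly two missing
faces; they are disjoint and each has exactly `ℓ+1` vertices. -/
theorem statement_14 {l : ℕ}
    (C : Set (Euc (2 * l))) (hC : IsCyclicPolytope (2 * l) (2 * l + 2) C) :
    ∃ M₁ M₂ : Set (Euc (2 * l)), M₁ ≠ M₂ ∧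
      {M | IsMissingFace C M} = {M₁, M₂} ∧
      M₁ ∩ M₂ = ∅ ∧ M₁.ncard = l + 1 ∧ M₂.ncard = l + 1 := by
  obtain ⟨t, ht, rfl, hcard⟩ := hC
  set u := t ∘ Tuple.sort t
  have hu : StrictMono u := (Tuple.monotone_sort t).strictMono_of_injective
    (ht.comp (Tuple.sort t).injective)
  have hrange : (range fun i => momentCurve (2 * l) (t i)) =
      range fun i => momentCurve (2 * l) (u i) :=
    ((Tuple.sort t).surjective.range_comp _).symm
  rw [hrange] at hcard ⊢
  obtain ⟨hv, hg⟩ := verts_eq_range_of_ncard hcard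
  set E := {i : Fin (2 * l + 2) | (i : ℕ) % 2 = 0}
  set O := {i : Fin (2 * l + 2) | (i : ℕ) % 2 = 1}
  have hface (S : Set (Fin (2 * l + 2))) := memBoundary_iff_nodalWeight (d := 2 * l) hu.injective
    (Fintype.card_fin _) S
  simp only [nodalWeight_neg_iff hu, nodalWeight_pos_iff hu] at hface
  have hEO : ¬ E ⊆ O := fun h => by simpa [E, O] using @h 0 (by simp [E])
  have hOE : ¬ O ⊆ E := fun h => by simpa [E, O] using @h 1 (by simp [O])
  refine ⟨_ '' E, _ '' O, fun h => hEO (hg.image_injective h).le, ?_, ?_,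
    (ncard_image_of_injective _ hg).trans (ncard_fin_mod_two_eq l (by omega)),
    (ncard_image_of_injective _ hg).trans (ncard_fin_mod_two_eq l (by omega))⟩
  · ext A
    exact isMissingFace_iff hv hg hface hEO hOE A
  · rw [← image_inter hg]
    simp [E, O, Set.ext_iff]
end
end
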